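/- arXiv:2603.05251 — 2 statements merged into one kernel-verified Lean document; each statement's English description precedes it below -/
import Mathlib

section
/- Let C > 0, α > 0, Lx > 0, Ly > 0, d > 0 be real numbers. Then (1/(Lx·Ly)) ∫₀^{Lx} ∫₀^{Ly} log₂( C · e^{−α·min(x, Lx−x)} / (y² + d²) ) dy dx = log₂(C) − (α·Lx/4)·log₂(e) − [ log₂(Ly² + d²) − (2/ln 2)·(1 − (d/Ly)·arctan(Ly/d)) ]. -/
/-!
The base-2 logarithm splits the integrand into a function of `x` plus a function of `y`,
so the double integral separates into two one-dimensional integrals. The tent function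
`min x (Lx - x)` has integral `Lx² / 4` over `[0, Lx]`, and `y ↦ log (y² + d²)` has the
antiderivative `y log (y² + d²) - 2y + 2d arctan (y / d)` (integration by parts).
-/

open Real intervalIntegral

theorem integral_integral_add_of_intervalIntegrable {f g : ℝ → ℝ} {a b c d : ℝ}
    (hf : IntervalIntegrable f MeasureTheory.volume a b)
    (hg : IntervalIntegrable g MeasureTheory.volume c d) :
    ∫ x in a..b, ∫ y in c..d, (f x + g y)
      = (d - c) * (∫ x in a..b, f x) + (b - a) * ∫ y in c..d, g y := by
  have inner : ∀ x, ∫ y in c..d, (f x + g y) = (d - c) * f x + ∫ y in c..d, g y := fun x => by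
    rw [integral_add intervalIntegrable_const hg, integral_const, smul_eq_mul]
  simp only [inner]
  rw [integral_add (hf.const_mul _) intervalIntegrable_const, integral_const_mul,
    integral_const, smul_eq_mul]

theorem continuous_min_sub_self (L : ℝ) : Continuous fun x : ℝ => min x (L - x) :=
  continuous_id.min (continuous_const.sub continuous_id)

theorem integral_min_sub_self {L : ℝ} (hL : 0 ≤ L) :
    ∫ x in (0:ℝ)..L, min x (L - x) = L ^ 2 / 4 := by
  have left : ∫ x in (0:ℝ)..(L / 2), min x (L - x) = ∫ x in (0:ℝ)..(L / 2), x :=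
    integral_congr fun x hx => by
      rw [Set.uIcc_of_le (by linarith)] at hx
      exact min_eq_left (by linarith [hx.2])
  have right : ∫ x in (L / 2)..L, min x (L - x) = ∫ x in (L / 2)..L, (L - x) :=
    integral_congr fun x hx => by
      rw [Set.uIcc_of_le (by linarith)] at hx
      exact min_eq_right (by linarith [hx.1])
  rw [← integral_add_adjacent_intervals ((continuous_min_sub_self L).intervalIntegrable 0 (L / 2))
    ((continuous_min_sub_self L).intervalIntegrable (L / 2) L), left, right,
    integral_sub intervalIntegrable_const intervalIntegrable_id, integral_id, integral_id,
    integral_const, smul_eq_mul]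
  ring

theorem continuous_log_sq_add_sq {d : ℝ} (hd : d ≠ 0) :
    Continuous fun y : ℝ => log (y ^ 2 + d ^ 2) :=
  (continuous_pow 2 |>.add continuous_const).log fun y => (by positivity : y ^ 2 + d ^ 2 ≠ 0)

theorem integral_log_sq_add_sq (L : ℝ) {d : ℝ} (hd : d ≠ 0) :
    ∫ y in (0:ℝ)..L, log (y ^ 2 + d ^ 2)
      = L * log (L ^ 2 + d ^ 2) - 2 * L + 2 * d * arctan (L / d) := by
  have hderiv : ∀ y ∈ Set.uIcc (0:ℝ) L,
      HasDerivAt (fun y => y * log (y ^ 2 + d ^ 2) - 2 * y + 2 * d * arctan (y / d))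
        (log (y ^ 2 + d ^ 2)) y := by
    intro y _
    have hsq : y ^ 2 + d ^ 2 ≠ 0 := by positivity
    have hlog : HasDerivAt (fun y : ℝ => log (y ^ 2 + d ^ 2)) (2 * y / (y ^ 2 + d ^ 2)) y := by
      simpa using ((hasDerivAt_pow 2 y).add_const (d ^ 2)).log hsq
    have harctan := (hasDerivAt_arctan (y / d)).comp y ((hasDerivAt_id y).div_const d)
    refine ((((hasDerivAt_id y).mul hlog).sub ((hasDerivAt_id y).const_mul 2)).add
      (harctan.const_mul (2 * d))).congr_deriv ?_
    simp only [id]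
    field_simp
    ring
  rw [integral_eq_sub_of_hasDerivAt hderiv
    ((continuous_log_sq_add_sq hd).intervalIntegrable 0 L)]
  simp

theorem logb_mul_exp_div {C y : ℝ} (hC : C ≠ 0) (t : ℝ) (hy : y ≠ 0) :
    logb 2 (C * exp t / y) = (logb 2 C + t / log 2) + -logb 2 y := by
  rw [logb, log_div (by positivity) hy, log_mul hC (exp_pos t).ne', log_exp, logb, logb]
  ring

theorem df_pas_single_waveguide_ergodic_rate_general
    (C α Lx Ly d : ℝ) (hC : 0 < C) (hLx : 0 < Lx) (hLy : 0 < Ly)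
    (hd : 0 < d) :
    (1 / (Lx * Ly)) *
      ∫ x in (0:ℝ)..Lx, ∫ y in (0:ℝ)..Ly,
        Real.logb 2 (C * Real.exp (-α * min x (Lx - x)) / (y ^ 2 + d ^ 2))
    = Real.logb 2 C - (α * Lx / 4) * Real.logb 2 (Real.exp 1)
      - (Real.logb 2 (Ly ^ 2 + d ^ 2)
          - (2 / Real.log 2) * (1 - (d / Ly) * Real.arctan (Ly / d))) := by
  set f : ℝ → ℝ := fun x => logb 2 C + -α * min x (Lx - x) / log 2
  set g : ℝ → ℝ := fun y => -logb 2 (y ^ 2 + d ^ 2)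
  have hsplit : ∀ x y : ℝ,
      logb 2 (C * exp (-α * min x (Lx - x)) / (y ^ 2 + d ^ 2)) = f x + g y :=
    fun x y => logb_mul_exp_div hC.ne' _ (by positivity)
  have hmin_int : IntervalIntegrable (fun x => -α * min x (Lx - x) / log 2)
      MeasureTheory.volume 0 Lx :=
    (continuous_min_sub_self Lx).intervalIntegrable 0 Lx |>.const_mul (-α) |>.div_const _
  have hf_int : IntervalIntegrable f MeasureTheory.volume 0 Lx :=
    intervalIntegrable_const.add hmin_int
  have hg_int : IntervalIntegrable g MeasureTheory.volume 0 Ly :=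
    (continuous_log_sq_add_sq hd.ne').intervalIntegrable 0 Ly |>.div_const _ |>.neg
  have hf : ∫ x in (0:ℝ)..Lx, f x = Lx * logb 2 C - α * (Lx ^ 2 / 4) / log 2 := by
    rw [integral_add intervalIntegrable_const hmin_int, integral_const, integral_div,
      integral_const_mul, integral_min_sub_self hLx.le, smul_eq_mul]
    ring
  have hg : ∫ y in (0:ℝ)..Ly, g y
      = -(Ly * log (Ly ^ 2 + d ^ 2) - 2 * Ly + 2 * d * arctan (Ly / d)) / log 2 := by
    simp only [g, logb]
    rw [integral_neg, integral_div, integral_log_sq_add_sq Ly hd.ne', neg_div]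
  simp only [hsplit]
  rw [integral_integral_add_of_intervalIntegrable hf_int hg_int, hf, hg]
  simp only [logb, log_exp]
  field_simp
  ring

theorem df_pas_single_waveguide_ergodic_rate
    (C α Lx Ly d : ℝ) (hC : 0 < C) (hα : 0 < α) (hLx : 0 < Lx) (hLy : 0 < Ly)
    (hd : 0 < d) :
    (1 / (Lx * Ly)) *
      ∫ x in (0:ℝ)..Lx, ∫ y in (0:ℝ)..Ly,
        Real.logb 2 (C * Real.exp (-α * min x (Lx - x)) / (y ^ 2 + d ^ 2))
    = Real.logb 2 C - (α * Lx / 4) * Real.logb 2 (Real.exp 1)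
      - (Real.logb 2 (Ly ^ 2 + d ^ 2)
          - (2 / Real.log 2) * (1 - (d / Ly) * Real.arctan (Ly / d))) :=
  df_pas_single_waveguide_ergodic_rate_general C α Lx Ly d hC hLx hLy hd
end

section
/- Let C > 0, α > 0, Lx > 0, Ly > 0, d > 0 be real numbers. Then the difference (1/(Lx·Ly)) ∫₀^{Lx} ∫₀^{Ly} [ log₂( C · e^{−α·min(x, Lx−x)} / (y² + d²) ) − log₂( C · e^{−α·x} / (y² + d²) ) ] dy dx equals (α·Lx/4)·log₂(e), and in particular this difference is strictly positive. -/
open Real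

theorem df_pas_rate_gain
    (C α Lx Ly d : ℝ) (hC : 0 < C) (hα : 0 < α) (hLx : 0 < Lx) (hLy : 0 < Ly)
    (hd : 0 < d) :
    (1 / (Lx * Ly)) *
      ∫ x in (0:ℝ)..Lx, ∫ y in (0:ℝ)..Ly,
        (Real.logb 2 (C * Real.exp (-α * min x (Lx - x)) / (y ^ 2 + d ^ 2))
          - Real.logb 2 (C * Real.exp (-α * x) / (y ^ 2 + d ^ 2)))
    = (α * Lx / 4) * Real.logb 2 (Real.exp 1)
    ∧ 0 < (1 / (Lx * Ly)) *
      ∫ x in (0:ℝ)..Lx, ∫ y in (0:ℝ)..Ly,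
        (Real.logb 2 (C * Real.exp (-α * min x (Lx - x)) / (y ^ 2 + d ^ 2))
          - Real.logb 2 (C * Real.exp (-α * x) / (y ^ 2 + d ^ 2))) := by
  have hlog2 : (0:ℝ) < Real.log 2 := Real.log_pos (by norm_num)
  have key : ∀ x y : ℝ,
      Real.logb 2 (C * Real.exp (-α * min x (Lx - x)) / (y ^ 2 + d ^ 2))
        - Real.logb 2 (C * Real.exp (-α * x) / (y ^ 2 + d ^ 2))
      = α * (x - min x (Lx - x)) * (1 / Real.log 2) := by
    intro x y
    have hD : (0:ℝ) < y ^ 2 + d ^ 2 := by positivity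
    rw [Real.logb, Real.logb, Real.log_div (by positivity) hD.ne',
      Real.log_div (by positivity) hD.ne',
      Real.log_mul hC.ne' (Real.exp_pos _).ne',
      Real.log_mul hC.ne' (Real.exp_pos _).ne',
      Real.log_exp, Real.log_exp]
    ring
  have hinner : ∀ x : ℝ,
      (∫ y in (0:ℝ)..Ly,
        (Real.logb 2 (C * Real.exp (-α * min x (Lx - x)) / (y ^ 2 + d ^ 2))
          - Real.logb 2 (C * Real.exp (-α * x) / (y ^ 2 + d ^ 2))))
      = Ly * (α * (x - min x (Lx - x)) * (1 / Real.log 2)) := by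
    intro x
    rw [intervalIntegral.integral_congr (g := fun _ => α * (x - min x (Lx - x)) * (1 / Real.log 2))
      (fun y _ => key x y)]
    simp [intervalIntegral.integral_const]
    ring
  have houter :
      (∫ x in (0:ℝ)..Lx, Ly * (α * (x - min x (Lx - x)) * (1 / Real.log 2)))
      = Ly * α * (Lx ^ 2 / 4) * (1 / Real.log 2) := by
    have hsplit : (∫ x in (0:ℝ)..Lx, Ly * (α * (x - min x (Lx - x)) * (1 / Real.log 2)))
        = (∫ x in (0:ℝ)..(Lx/2), Ly * (α * (x - min x (Lx - x)) * (1 / Real.log 2)))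
          + ∫ x in (Lx/2)..Lx, Ly * (α * (x - min x (Lx - x)) * (1 / Real.log 2)) := by
      rw [intervalIntegral.integral_add_adjacent_intervals] <;>
      · apply Continuous.intervalIntegrable
        continuity
    have h1 : (∫ x in (0:ℝ)..(Lx/2), Ly * (α * (x - min x (Lx - x)) * (1 / Real.log 2))) = 0 := by
      rw [intervalIntegral.integral_congr (g := fun _ => (0:ℝ))]
      · simp
      · intro x hx
        rw [Set.uIcc_of_le (by linarith)] at hx
        have h2 : min x (Lx - x) = x := min_eq_left (by
          obtain ⟨h1, h2⟩ := hx; linarith)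
        simp [h2]
    have h2 : (∫ x in (Lx/2)..Lx, Ly * (α * (x - min x (Lx - x)) * (1 / Real.log 2)))
        = Ly * α * (Lx ^ 2 / 4) * (1 / Real.log 2) := by
      rw [intervalIntegral.integral_congr
        (g := fun x => Ly * α * (1 / Real.log 2) * (2 * x - Lx))]
      · rw [intervalIntegral.integral_const_mul]
        have : (∫ x in (Lx/2)..Lx, (2 * x - Lx)) = Lx ^ 2 / 4 := by
          rw [intervalIntegral.integral_sub (by apply Continuous.intervalIntegrable; continuity)
            (intervalIntegrable_const)]
          rw [intervalIntegral.integral_const_mul, integral_id]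
          simp
          ring
        rw [this]; ring
      · intro x hx
        rw [Set.uIcc_of_le (by linarith)] at hx
        have hm : min x (Lx - x) = Lx - x := min_eq_right (by
          obtain ⟨h1, h2⟩ := hx; linarith)
        simp only [hm]; ring
    rw [hsplit, h1, h2]; ring
  have hb2e : Real.logb 2 (Real.exp 1) = 1 / Real.log 2 := by
    rw [Real.logb, Real.log_exp]
  have heq : (1 / (Lx * Ly)) *
      ∫ x in (0:ℝ)..Lx, ∫ y in (0:ℝ)..Ly,
        (Real.logb 2 (C * Real.exp (-α * min x (Lx - x)) / (y ^ 2 + d ^ 2))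
          - Real.logb 2 (C * Real.exp (-α * x) / (y ^ 2 + d ^ 2)))
      = (α * Lx / 4) * Real.logb 2 (Real.exp 1) := by
    rw [intervalIntegral.integral_congr (g := fun x => Ly * (α * (x - min x (Lx - x)) * (1 / Real.log 2)))
      (fun x _ => hinner x), houter, hb2e]
    field_simp
  refine ⟨heq, ?_⟩
  rw [heq, hb2e]
  positivity
end
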